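/- Let U ⊆ ℂ be open, k, l ∈ ℕ, m ∈ ℂ with m ≠ 0 and m ≠ 1, and let h : U → ℂ be holomorphic with derivative h' and with h(z) ∉ {0, 1, m} for all z ∈ U. Suppose there exist holomorphic, nowhere-vanishing functions u, v : U → ℂ with u(z)^(l+1) = h(z) and v(z)^(k+1) = (h(z) − 1)/(h(z) − m) for all z ∈ U. Then for all integers n₀, n₁ ∈ ℤ, the nowhere-vanishing function s(z) := u(z)^(−n₀) · v(z)^(−n₁) satisfies, for every z ∈ U, s'(z) = −( (n₀/(l+1)) · h'(z)/h(z) + (n₁/(k+1)) · ( h'(z)/(h(z)−1) − h'(z)/(h(z)−m) ) ) · s(z). In other words, s is a globally defined parallel section of the pull-back under h of the connection d + (n₀/(l+1)) dz/z + (n₁/(k+1)) (dz/(z−1) − dz/(z−m)), so this pull-back connection has trivial monodromy. -/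

import Mathlib

/-! The parallel-section equation `s' = -ω s` says that the logarithmic derivative of
`s = u^(-n₀) v^(-n₁)` is `-ω`. Logarithmic derivatives turn
`u^(l+1) = h` into `(l+1) u'/u = h'/h` and `v^(k+1) = (h-1)/(h-m)` into
`(k+1) v'/v = h'/(h-1) - h'/(h-m)`, and they are additive on products of powers. -/

open Filter Topology

section LogDeriv

variable {𝕜 : Type*} [NontriviallyNormedField 𝕜] {f g : 𝕜 → 𝕜} {f' x : 𝕜}

theorem HasDerivAt.logDeriv_eq (hf : HasDerivAt f f' x) : logDeriv f x = f' / f x := by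
  rw [logDeriv_apply, hf.deriv]

theorem DifferentiableAt.hasDerivAt_logDeriv_mul (hf : DifferentiableAt 𝕜 f x) (hx : f x ≠ 0) :
    HasDerivAt f (logDeriv f x * f x) x := by
  rw [logDeriv_apply, div_mul_cancel₀ _ hx]
  exact hf.hasDerivAt

theorem logDeriv_fun_zpow_mul_fun_zpow (hf : DifferentiableAt 𝕜 f x)
    (hg : DifferentiableAt 𝕜 g x) (hfx : f x ≠ 0) (hgx : g x ≠ 0) (a b : ℤ) :
    logDeriv (fun y => f y ^ a * g y ^ b) x = a * logDeriv f x + b * logDeriv g x := by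
  rw [logDeriv_mul (f := (f · ^ a)) (g := (g · ^ b)) x (zpow_ne_zero a hfx) (zpow_ne_zero b hgx)
    (hf.zpow (.inl hfx)) (hg.zpow (.inl hgx)), logDeriv_fun_zpow hf, logDeriv_fun_zpow hg]

theorem logDeriv_eq_div_of_pow_eventuallyEq [CharZero 𝕜] (hf : DifferentiableAt 𝕜 f x)
    (n : ℕ) (hfg : (fun y => f y ^ (n + 1)) =ᶠ[𝓝 x] g) :
    logDeriv f x = logDeriv g x / (n + 1) := by
  rw [← (logDeriv_congr_nhds hfg).eq_of_nhds, logDeriv_fun_pow hf]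
  push_cast
  field_simp

end LogDeriv

theorem stmt0_general (U : Set ℂ) (hU : IsOpen U) (k l : ℕ) (m : ℂ)
    (h h' u v : ℂ → ℂ)
    (hh : ∀ z ∈ U, HasDerivAt h (h' z) z)
    (hval : ∀ z ∈ U, h z ≠ 0 ∧ h z ≠ 1 ∧ h z ≠ m)
    (hu : DifferentiableOn ℂ u U) (hv : DifferentiableOn ℂ v U)
    (hu0 : ∀ z ∈ U, u z ≠ 0) (hv0 : ∀ z ∈ U, v z ≠ 0)
    (huh : ∀ z ∈ U, u z ^ (l + 1) = h z)
    (hvh : ∀ z ∈ U, v z ^ (k + 1) = (h z - 1) / (h z - m))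
    (n₀ n₁ : ℤ) :
    ∀ z ∈ U,
      (u z ^ (-n₀) * v z ^ (-n₁) ≠ 0) ∧
      HasDerivAt (fun w => u w ^ (-n₀) * v w ^ (-n₁))
        (-(((n₀ : ℂ) / (l + 1)) * (h' z / h z) +
            ((n₁ : ℂ) / (k + 1)) * (h' z / (h z - 1) - h' z / (h z - m)))
          * (u z ^ (-n₀) * v z ^ (-n₁))) z := by
  intro z hz
  have hUz : U ∈ 𝓝 z := hU.mem_nhds hz
  obtain ⟨-, hz1, hzm⟩ := hval z hz
  have hud := (hu z hz).differentiableAt hUz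
  have hvd := (hv z hz).differentiableAt hUz
  have hs0 : u z ^ (-n₀) * v z ^ (-n₁) ≠ 0 :=
    mul_ne_zero (zpow_ne_zero _ (hu0 z hz)) (zpow_ne_zero _ (hv0 z hz))
  have hlogu : logDeriv u z = h' z / h z / (l + 1) := by
    rw [logDeriv_eq_div_of_pow_eventuallyEq hud l (eventually_of_mem hUz huh),
      (hh z hz).logDeriv_eq]
  have hlogv : logDeriv v z = (h' z / (h z - 1) - h' z / (h z - m)) / (k + 1) := by
    have h1 := (hh z hz).sub_const 1
    have hm := (hh z hz).sub_const m
    rw [logDeriv_eq_div_of_pow_eventuallyEq hvd k (eventually_of_mem hUz hvh),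
      logDeriv_div (f := (h · - 1)) (g := (h · - m)) z (sub_ne_zero.2 hz1) (sub_ne_zero.2 hzm)
        h1.differentiableAt hm.differentiableAt, h1.logDeriv_eq, hm.logDeriv_eq]
  have hs :=
    (hud.zpow (m := -n₀) (.inl (hu0 z hz))).fun_mul (hvd.zpow (m := -n₁) (.inl (hv0 z hz)))
  refine ⟨hs0, (hs.hasDerivAt_logDeriv_mul hs0).congr_deriv ?_⟩
  rw [logDeriv_fun_zpow_mul_fun_zpow hud hvd (hu0 z hz) (hv0 z hz), hlogu, hlogv]
  push_cast
  ring

/-- Coordinate form of the paper's Lemma (Solving-an-ODE): on an open set `U`,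
given a holomorphic `h` avoiding `0, 1, m` with derivative `h'`, and holomorphic
nowhere-vanishing `(l+1)`-th resp. `(k+1)`-th roots `u` of `h` and `v` of
`(h-1)/(h-m)`, the function `s = u^(-n₀) * v^(-n₁)` is a nowhere-vanishing
parallel section of the pull-back by `h` of
`d + (n₀/(l+1)) dz/z + (n₁/(k+1)) (dz/(z-1) - dz/(z-m))`,
i.e. `s' = -((n₀/(l+1)) h'/h + (n₁/(k+1)) (h'/(h-1) - h'/(h-m))) s` on `U`. -/
theorem stmt0 (U : Set ℂ) (hU : IsOpen U) (k l : ℕ) (m : ℂ) (hm0 : m ≠ 0) (hm1 : m ≠ 1)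
    (h h' u v : ℂ → ℂ)
    (hh : ∀ z ∈ U, HasDerivAt h (h' z) z)
    (hval : ∀ z ∈ U, h z ≠ 0 ∧ h z ≠ 1 ∧ h z ≠ m)
    (hu : DifferentiableOn ℂ u U) (hv : DifferentiableOn ℂ v U)
    (hu0 : ∀ z ∈ U, u z ≠ 0) (hv0 : ∀ z ∈ U, v z ≠ 0)
    (huh : ∀ z ∈ U, u z ^ (l + 1) = h z)
    (hvh : ∀ z ∈ U, v z ^ (k + 1) = (h z - 1) / (h z - m))
    (n₀ n₁ : ℤ) :
    ∀ z ∈ U,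
      (u z ^ (-n₀) * v z ^ (-n₁) ≠ 0) ∧
      HasDerivAt (fun w => u w ^ (-n₀) * v w ^ (-n₁))
        (-(((n₀ : ℂ) / (l + 1)) * (h' z / h z) +
            ((n₁ : ℂ) / (k + 1)) * (h' z / (h z - 1) - h' z / (h z - m)))
          * (u z ^ (-n₀) * v z ^ (-n₁))) z :=
  stmt0_general U hU k l m h h' u v hh hval hu hv hu0 hv0 huh hvh n₀ n₁
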